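/- For every natural number n ≥ 1, all zeros of the polynomial X_n(a) = 2^{2n-1}·(a+1/2)_n - binom(2n-1, n-1)·(a)_n (a degree-n polynomial in a) are real and negative. -/

import Mathlib

open Finset

/-- The Pochhammer symbol (rising factorial) `(y)_n = y (y+1) ⋯ (y+n-1)`, over `ℂ`. -/
noncomputable def pochC (y : ℂ) (n : ℕ) : ℂ := ∏ k ∈ Finset.range n, (y + k)

/-- The polynomial `X_n(z) = 2^{2n-1} (z+1/2)_n - C(2n-1, n-1) (z)_n`, viewed over `ℂ`. -/
noncomputable def XpolyC (n : ℕ) (z : ℂ) : ℂ :=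
  2 ^ (2 * n - 1) * pochC (z + 1 / 2) n - (((2 * n - 1).choose (n - 1)) : ℂ) * pochC z n

/-!
A zero satisfies `2^{2n-1} (z + 1/2)_n = b (z)_n` with `0 < b = C(2n-1, n-1) < 2^{2n-1}`.

If `Re z ≥ 0`, then `|z + k| ≤ |z + k + 1/2|` for every `k`, so `|(z)_n| ≤ |(z + 1/2)_n| ≠ 0`,
which is incompatible with `b < 2^{2n-1}`.

If `Im z ≠ 0`, expand `(z + 1/2)_n / (z)_n = 1 + ∑ c_k / (z + k)` in partial fractions. The poles
`-k` and the zeros `-k - 1/2` interlace, which makes every residue `c_k` positive, so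
`Im ((z + 1/2)_n / (z)_n) = -Im z · ∑ c_k / |z + k|² ≠ 0`; but this quotient equals `b / 2^{2n-1}`.
-/

open Polynomial Lagrange Complex

theorem Lagrange.eval_nodal_eq_eval_nodal_mul_one_add_sum {F ι : Type*} [Field F] [DecidableEq ι]
    {s : Finset ι} {u v : ι → F} {x : F} (hvs : Set.InjOn v s) (hx : ∀ i ∈ s, x ≠ v i) :
    (nodal s u).eval x = (nodal s v).eval x *
      (1 + ∑ i ∈ s, nodalWeight s v i * (x - v i)⁻¹ * (nodal s u).eval (v i)) := by
  -- Both nodal polynomials are monic of degree `#s`, so their difference is its own Lagrange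
  -- interpolant on the nodes `v`.
  have hdeg : (nodal s u - nodal s v).degree < #s := by
    rw [← degree_nodal (v := u)]
    exact degree_sub_lt_left (by rw [degree_nodal, degree_nodal]) nodal_ne_zero
      (by rw [nodal_monic.leadingCoeff, nodal_monic.leadingCoeff])
  have key := congrArg (eval x) (eq_interpolate hvs hdeg)
  rw [eval_interpolate_not_at_node _ hx, eval_sub] at key
  have hnode : ∀ i ∈ s, (nodal s u - nodal s v).eval (v i) = (nodal s u).eval (v i) :=
    fun i hi => by rw [eval_sub, eval_nodal_at_node hi, sub_zero]
  rw [Finset.sum_congr rfl fun i hi => by rw [hnode i hi]] at key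
  linear_combination key

theorem pochC_eq_zero_iff {y : ℂ} {n : ℕ} : pochC y n = 0 ↔ ∃ k < n, y = -k := by
  simp [pochC, prod_eq_zero_iff, add_eq_zero_iff_eq_neg]

theorem pochC_ne_zero_of_im_ne_zero {y : ℂ} (hy : y.im ≠ 0) (n : ℕ) : pochC y n ≠ 0 := by
  rw [Ne, pochC_eq_zero_iff]
  rintro ⟨k, -, rfl⟩
  simp at hy

theorem pochC_ne_zero_of_re_pos {y : ℂ} (hy : 0 < y.re) (n : ℕ) : pochC y n ≠ 0 := by
  rw [Ne, pochC_eq_zero_iff]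
  rintro ⟨k, -, rfl⟩
  exact k.cast_nonneg.not_gt (by simpa using hy)

theorem norm_le_norm_add_ofReal {z : ℂ} {t : ℝ} (hz : 0 ≤ z.re) (ht : 0 ≤ t) : ‖z‖ ≤ ‖z + t‖ := by
  rw [← sq_le_sq₀ (norm_nonneg _) (norm_nonneg _), Complex.sq_norm, Complex.sq_norm, normSq_apply,
    normSq_apply]
  simp only [add_re, ofReal_re, add_im, ofReal_im, add_zero]
  nlinarith

theorem norm_pochC_le_norm_pochC_add {z : ℂ} {t : ℝ} (hz : 0 ≤ z.re) (ht : 0 ≤ t) (n : ℕ) :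
    ‖pochC z n‖ ≤ ‖pochC (z + t) n‖ := by
  simp only [pochC, norm_prod]
  refine prod_le_prod (fun k _ => norm_nonneg _) fun k _ => ?_
  rw [add_right_comm]
  exact norm_le_norm_add_ofReal (by simpa using hz.trans (le_add_of_nonneg_right k.cast_nonneg)) ht

/-- The residue of `z ↦ pochC (z + t) n / pochC z n` at its simple pole `z = -k`. -/
noncomputable def pochRatioResidue (t : ℝ) (n k : ℕ) : ℝ :=
  (∏ j ∈ range n, ((j : ℝ) - k + t)) / ∏ j ∈ (range n).erase k, ((j : ℝ) - k)

theorem pochRatioResidue_pos {t : ℝ} (ht₀ : 0 < t) (ht₁ : t < 1) {n k : ℕ} (hk : k ∈ range n) :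
    0 < pochRatioResidue t n k := by
  rw [pochRatioResidue, ← mul_prod_erase _ _ hk, sub_self, zero_add, mul_div_assoc,
    ← prod_div_distrib]
  refine mul_pos ht₀ (prod_pos fun j hj => ?_)
  rcases (ne_of_mem_erase hj).lt_or_gt with h | h
  · have : (j : ℝ) + 1 ≤ k := by exact_mod_cast h
    exact div_pos_of_neg_of_neg (by linarith) (by linarith)
  · have : (k : ℝ) + 1 ≤ j := by exact_mod_cast h
    exact div_pos (by linarith) (by linarith)

theorem pochC_add_eq_mul_one_add_sum {z : ℂ} {n : ℕ} (hz : pochC z n ≠ 0) (t : ℝ) :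
    pochC (z + t) n = pochC z n * (1 + ∑ k ∈ range n, (pochRatioResidue t n k : ℂ) / (z + k)) := by
  have hnodes : ∀ k ∈ range n, z ≠ -(k : ℂ) := fun k hk h =>
    hz (pochC_eq_zero_iff.mpr ⟨k, mem_range.mp hk, h⟩)
  have hinj : Set.InjOn (fun k : ℕ => -(k : ℂ)) (range n) := fun a _ b _ h => by simpa using h
  have key :=
    eval_nodal_eq_eval_nodal_mul_one_add_sum (u := fun k : ℕ => -((k : ℂ) + t)) hinj hnodes
  simp only [eval_nodal, sub_neg_eq_add] at key
  have hres : ∀ k ∈ range n, nodalWeight (range n) (fun k : ℕ => -(k : ℂ)) k * (z + k)⁻¹ *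
      ∏ j ∈ range n, (-(k : ℂ) + (j + t)) = (pochRatioResidue t n k : ℂ) / (z + k) := by
    intro k _
    rw [nodalWeight, prod_inv_distrib, pochRatioResidue]
    push_cast
    rw [prod_congr rfl fun (j : ℕ) _ => (by ring : -(k : ℂ) - -(j : ℂ) = j - k),
      prod_congr rfl fun (j : ℕ) _ => (by ring : -(k : ℂ) + (j + t) = j - k + t)]
    ring
  rw [sum_congr rfl hres] at key
  rw [pochC, pochC, ← key]
  exact prod_congr rfl fun k _ => by ring

theorem im_pochC_add_div_pochC {z : ℂ} {n : ℕ} (hz : pochC z n ≠ 0) (t : ℝ) :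
    (pochC (z + t) n / pochC z n).im =
      -z.im * ∑ k ∈ range n, pochRatioResidue t n k / normSq (z + k) := by
  rw [pochC_add_eq_mul_one_add_sum hz, mul_div_cancel_left₀ _ hz, add_im, one_im, zero_add,
    im_sum, mul_sum]
  refine sum_congr rfl fun k _ => ?_
  rw [div_eq_mul_inv, im_ofReal_mul, inv_im]
  simp only [add_im, natCast_im, add_zero]
  ring

theorem im_pochC_add_div_pochC_ne_zero {z : ℂ} (hz : z.im ≠ 0) {n : ℕ} (hn : n ≠ 0) {t : ℝ}
    (ht₀ : 0 < t) (ht₁ : t < 1) : (pochC (z + t) n / pochC z n).im ≠ 0 := by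
  have hz₀ := pochC_ne_zero_of_im_ne_zero hz n
  rw [im_pochC_add_div_pochC hz₀]
  refine mul_ne_zero (neg_ne_zero.mpr hz) (sum_pos (fun k hk => ?_) (nonempty_range_iff.mpr hn)).ne'
  refine div_pos (pochRatioResidue_pos ht₀ ht₁ hk) (normSq_pos.mpr fun h => hz₀ ?_)
  exact pochC_eq_zero_iff.mpr ⟨k, mem_range.mp hk, eq_neg_of_add_eq_zero_left h⟩

/-- All zeros of `X_n` are real and negative. -/
theorem Xpoly_zeros_real_negative (n : ℕ) (hn : 1 ≤ n) (z : ℂ) (hz : XpolyC n z = 0) :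
    z.im = 0 ∧ z.re < 0 := by
  have hb : (0 : ℝ) < (2 * n - 1).choose (n - 1) := by exact_mod_cast Nat.choose_pos (by omega)
  have hbm : ((2 * n - 1).choose (n - 1) : ℝ) < 2 ^ (2 * n - 1) := by
    exact_mod_cast Nat.choose_lt_two_pow _ _ (by omega)
  set b : ℝ := ((2 * n - 1).choose (n - 1) : ℝ)
  set m := 2 * n - 1
  have heq : (2 : ℂ) ^ m * pochC (z + (1 / 2 : ℝ)) n = b * pochC z n := by
    rw [XpolyC, sub_eq_zero] at hz
    rw [ofReal_div, ofReal_one, ofReal_ofNat, hz, ofReal_natCast]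
  constructor
  · by_contra him
    have hratio : pochC (z + (1 / 2 : ℝ)) n / pochC z n = ((b / 2 ^ m : ℝ) : ℂ) := by
      rw [div_eq_iff (pochC_ne_zero_of_im_ne_zero him n), ofReal_div b, ofReal_pow, ofReal_ofNat,
        div_mul_eq_mul_div, eq_div_iff (pow_ne_zero _ two_ne_zero), ← heq, mul_comm]
    exact im_pochC_add_div_pochC_ne_zero (n := n) (t := 1 / 2) him (by omega) (by norm_num)
      (by norm_num) (by rw [hratio, ofReal_im])
  · by_contra! hre
    have hA : 0 < ‖pochC (z + (1 / 2 : ℝ)) n‖ :=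
      norm_pos_iff.mpr (pochC_ne_zero_of_re_pos (by rw [add_re, ofReal_re]; linarith) n)
    have hnorm := congrArg norm heq
    rw [norm_mul, norm_mul, norm_pow, Complex.norm_two, norm_real,
      Real.norm_of_nonneg hb.le] at hnorm
    refine lt_irrefl ((2 : ℝ) ^ m * ‖pochC (z + (1 / 2 : ℝ)) n‖) ?_
    calc (2 : ℝ) ^ m * ‖pochC (z + (1 / 2 : ℝ)) n‖ = b * ‖pochC z n‖ := hnorm
      _ ≤ b * ‖pochC (z + (1 / 2 : ℝ)) n‖ :=
        mul_le_mul_of_nonneg_left (norm_pochC_le_norm_pochC_add hre (by norm_num) n) hb.le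
      _ < 2 ^ m * ‖pochC (z + (1 / 2 : ℝ)) n‖ := mul_lt_mul_of_pos_right hbm hA
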